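/- arXiv:2409.04305 — 2 statements merged into one kernel-verified Lean document; each statement's English description precedes it below -/
import Mathlib

section
/- Let t, u be real numbers with t + i ≠ 0 and u + i ≠ 0 for every integer i ≥ 0, and let (a_{2n})_{n≥1}, (κ_{2ℓ})_{ℓ≥1}, (m_{2k})_{k≥1} be real sequences satisfying the formal power series identities exp(Σ_{ℓ≥1} (κ_{2ℓ}/ℓ) z^{2ℓ}) = 1 + Σ_{n≥1} (a_{2n}/((t)_n (u)_n)) z^{2n} and exp(t Σ_{k≥1} (m_{2k}/k) z^{2k}) = 1 + Σ_{n≥1} a_{2n} z^{2n} in ℝ[[z]]. Then for every n ≥ 1: κ_{2n} = (1/(2(2n−1)!)) · Σ_{σ ∈ P^even(2n)} [ (2t)^{#(σ)} (Π_{V∈σ} (|V|−1)!) · ( Σ_{π ∈ P^even(2n): π ≥ σ} (−1)^{#(π)−1} (#(π)−1)! / Π_{B∈π} (t)_{|B|/2} (u)_{|B|/2} ) ] · m_σ, where π ≥ σ means that σ is a refinement of π (every block of σ is contained in some block of π). -/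
open Finset

/-- All blocks have even cardinality. -/
def IsEvenPartition {n : ℕ} (π : Finpartition (Finset.univ : Finset (Fin n))) : Prop :=
  ∀ B ∈ π.parts, Even B.card

open Classical in
/-- The finite set of even set partitions of `[n]`. -/
noncomputable def evenPartitions (n : ℕ) :
    Finset (Finpartition (Finset.univ : Finset (Fin n))) :=
  Finset.univ.filter IsEvenPartition

/-- `σ` is a refinement of `π` (i.e. `π ≥ σ`): every block of `σ` is contained in a block of `π`. -/
def IsRefinement {n : ℕ} (π σ : Finpartition (Finset.univ : Finset (Fin n))) : Prop :=
  ∀ V ∈ σ.parts, ∃ B ∈ π.parts, V ⊆ B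

/-- Pochhammer symbol `(v)_n = v (v+1) ⋯ (v+n-1)`. -/
noncomputable def pochEval (v : ℝ) (n : ℕ) : ℝ := (ascPochhammer ℝ n).eval v

/-- Formal exponential of a power series with zero constant term. -/
noncomputable def fexp (F : PowerSeries ℝ) : PowerSeries ℝ :=
  PowerSeries.mk fun n =>
    ∑ k ∈ Finset.range (n + 1), (PowerSeries.coeff n (F ^ k)) / (k.factorial : ℝ)

/-- The series `Σ_{ℓ≥1} (x_ℓ/ℓ) z^{2ℓ}` associated to a sequence `(x_{2ℓ})_{ℓ≥1}`
(where `x ℓ` stands for `x_{2ℓ}`). -/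
noncomputable def evenSeries (x : ℕ → ℝ) : PowerSeries ℝ :=
  PowerSeries.mk fun j => if j ≠ 0 ∧ j % 2 = 0 then x (j / 2) / ((j / 2 : ℕ) : ℝ) else 0

/-- The series `1 + Σ_{n≥1} (a_{2n}/((t)_n (u)_n)) z^{2n}` (where `a n` stands for `a_{2n}`). -/
noncomputable def coeffSeriesTU (t u : ℝ) (a : ℕ → ℝ) : PowerSeries ℝ :=
  PowerSeries.mk fun j =>
    if j = 0 then 1
    else if j % 2 = 0 then a (j / 2) / (pochEval t (j / 2) * pochEval u (j / 2)) else 0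

/-- The series `1 + Σ_{n≥1} a_{2n} z^{2n}` (where `a n` stands for `a_{2n}`). -/
noncomputable def coeffSeries (a : ℕ → ℝ) : PowerSeries ℝ :=
  PowerSeries.mk fun j =>
    if j = 0 then 1 else if j % 2 = 0 then a (j / 2) else 0

/-!
Put `F = Σ (κ_ℓ/ℓ) z^{2ℓ}` and `G = t Σ (m_k/k) z^{2k}`. By hypothesis the coefficients of `exp F`
are those of `exp G` times `c_d = 1/((t)_{d/2} (u)_{d/2})` (and `c_d = 0` for odd `d`).

The compositional formula `n! [zⁿ] g(F) = Σ_π |π|! g_{|π|} Π_{B∈π} |B|! F_{|B|}`, over the set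
partitions `π` of an `n`-set, follows by induction on `n` from the chain rule, classifying `π` by
the block of a fixed point. For `g = exp` it is the exponential formula; for `g = log(1 + X)`,
evaluated at `exp F - 1`, it expresses `(2n)! F_{2n}` as
`Σ_π (-1)^{|π|-1} (|π|-1)! Π_{B∈π} |B|! [z^{|B|}] exp F`. Each factor equals `c_{|B|}` times
`|B|! [z^{|B|}] exp G`, which the exponential formula expands over partitions of `B`; multiplied
out, this is a sum over the refinements `σ ≤ π`. Exchanging the sums over `π` and `σ` gives the
theorem, where only even partitions survive because `G` and `c` vanish in odd degrees.
-/

open Finset PowerSeries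
open scoped Nat

theorem PowerSeries.coeff_subst_eq_sum_range {R : Type*} [CommRing R] {F : R⟦X⟧}
    (hF : constantCoeff F = 0) (g : R⟦X⟧) (n : ℕ) :
    coeff n (g.subst F) = ∑ d ∈ range (n + 1), coeff d g * coeff n (F ^ d) := by
  rw [coeff_subst' (HasSubst.of_constantCoeff_zero' hF)]
  refine finsum_eq_sum_of_support_subset _ fun d hd => ?_
  rw [Function.mem_support] at hd
  simp only [coe_range, Set.mem_Iio]
  by_contra! hnd
  have hzero : coeff n (F ^ d) = 0 := coeff_of_lt_order n <| lt_of_lt_of_le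
    (by exact_mod_cast (by omega : n < d)) (le_order_pow_of_constantCoeff_eq_zero d hF)
  exact hd (by rw [hzero, smul_zero])

theorem PowerSeries.constantCoeff_subst_of_constantCoeff_eq_zero {R : Type*} [CommRing R]
    {F : R⟦X⟧} (hF : constantCoeff F = 0) (g : R⟦X⟧) :
    constantCoeff (g.subst F) = constantCoeff g := by
  rw [← coeff_zero_eq_constantCoeff_apply, ← coeff_zero_eq_constantCoeff_apply,
    coeff_subst_eq_sum_range hF]
  simp

theorem PowerSeries.factorial_mul_coeff_subst_succ {R : Type*} [CommRing R] {F : R⟦X⟧}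
    (hF : constantCoeff F = 0) (g : R⟦X⟧) (m : ℕ) :
    ((m + 1)! : R) * coeff (m + 1) (g.subst F) =
      ∑ j ∈ range (m + 1), m.choose j • ((↑(j + 1)! * coeff (j + 1) F) *
        ((m - j)! * coeff (m - j) ((d⁄dX R g).subst F))) := by
  have hderiv : ((m + 1)! : R) * coeff (m + 1) (g.subst F) =
      m ! * coeff m (d⁄dX R F * (d⁄dX R g).subst F) := by
    rw [mul_comm (d⁄dX R F), ← derivative_subst (HasSubst.of_constantCoeff_zero' hF),
      coeff_derivative, Nat.factorial_succ]
    push_cast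
    ring
  rw [hderiv, coeff_mul,
    Nat.sum_antidiagonal_eq_sum_range_succ (fun i j => coeff i (d⁄dX R F) * coeff j _), mul_sum]
  refine sum_congr rfl fun j hj => ?_
  have hjm : j ≤ m := Nat.lt_succ_iff.1 (mem_range.1 hj)
  rw [coeff_derivative, nsmul_eq_mul, Nat.factorial_succ,
    ← Nat.choose_mul_factorial_mul_factorial hjm]
  push_cast
  ring

theorem PowerSeries.mk_neg_one_pow_mul_one_add_X {R : Type*} [CommRing R] :
    (mk fun n => (-1 : R) ^ n) * (1 + X) = 1 := by
  ext n
  rcases n with _ | n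
  · simp
  · rw [mul_add, mul_one, map_add, coeff_succ_mul_X, coeff_mk, coeff_mk, pow_succ, coeff_one]
    simp

namespace Finpartition

variable {α : Type*} [DecidableEq α] {s : Finset α}

theorem parts_avoid_of_mem (P : Finpartition s) {B : Finset α} (hB : B ∈ P.parts) :
    (P.avoid B).parts = P.parts.erase B := by
  ext C
  rw [mem_avoid, mem_erase]
  constructor
  · rintro ⟨D, hD, hDB, rfl⟩
    have hne : D ≠ B := by rintro rfl; exact hDB le_rfl
    have hdisj : Disjoint D B := P.disjoint hD hB hne
    rw [sdiff_eq_self_of_disjoint hdisj]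
    exact ⟨hne, hD⟩
  · rintro ⟨hne, hC⟩
    have hdisj : Disjoint C B := P.disjoint hC hB hne
    exact ⟨C, hC, fun hle => P.ne_bot hC (hdisj.eq_bot_of_le hle), sdiff_eq_self_of_disjoint hdisj⟩

theorem sum_part_eq_insert {R : Type*} [CommSemiring R] (v : ℕ → R) (f : Finset α → R)
    {a : α} (ha : a ∈ s) {B : Finset α} (hB : B ⊆ s.erase a) :
    ∑ π : Finpartition s with π.part a = insert a B, v #π.parts * ∏ C ∈ π.parts, f C =
      f (insert a B) *
        ∑ ρ : Finpartition (s.erase a \ B), v (#ρ.parts + 1) * ∏ C ∈ ρ.parts, f C := by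
  have hsd : s \ insert a B = s.erase a \ B := by rw [sdiff_insert, erase_sdiff_comm]
  have hdisj : Disjoint (s.erase a \ B) (insert a B) := by
    rw [disjoint_insert_right]; exact ⟨fun h => by simp at h, sdiff_disjoint⟩
  have hc : (s.erase a \ B) ⊔ insert a B = s := by
    rw [sup_eq_union, ← hsd, sdiff_union_of_subset (insert_subset ha (hB.trans (erase_subset a s)))]
  have hA : insert a B ≠ ⊥ := insert_ne_empty a B
  have hpart : ∀ ρ : Finpartition (s.erase a \ B), (ρ.extend hA hdisj hc).part a = insert a B :=
    fun ρ => (ρ.extend hA hdisj hc).part_eq_of_mem (by simp) (mem_insert_self a B)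
  have hAmem : ∀ π : Finpartition s, π.part a = insert a B → insert a B ∈ π.parts :=
    fun π h => h ▸ π.part_mem.2 ha
  rw [mul_sum]
  refine sum_nbij' (fun π => (π.avoid (insert a B)).copy hsd) (fun ρ => ρ.extend hA hdisj hc)
    (fun _ _ => mem_univ _) (fun ρ _ => by simpa using hpart ρ) ?_ ?_ ?_
  · intro π hπ
    simp only [mem_filter, mem_univ, true_and] at hπ
    ext C
    rw [extend_parts, copy_parts, parts_avoid_of_mem π (hAmem π hπ), insert_erase (hAmem π hπ)]
  · intro ρ _
    ext C
    rw [copy_parts, parts_avoid_of_mem _ (hAmem _ (hpart ρ)), extend_parts, erase_insert]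
    exact fun h => by simpa using ρ.le h (mem_insert_self a B)
  · intro π hπ
    simp only [mem_filter, mem_univ, true_and] at hπ
    rw [copy_parts, parts_avoid_of_mem π (hAmem π hπ), card_erase_add_one (hAmem π hπ),
      ← mul_prod_erase _ f (hAmem π hπ)]
    ring

theorem sum_mul_prod_parts_eq_sum_powerset_erase {R : Type*} [CommSemiring R] (v : ℕ → R)
    (f : Finset α → R) {a : α} (ha : a ∈ s) :
    ∑ π : Finpartition s, v #π.parts * ∏ B ∈ π.parts, f B =
      ∑ B ∈ (s.erase a).powerset, f (insert a B) *
        ∑ ρ : Finpartition (s.erase a \ B), v (#ρ.parts + 1) * ∏ C ∈ ρ.parts, f C := by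
  rw [← sum_fiberwise_of_maps_to (g := fun π : Finpartition s => (π.part a).erase a)
    (t := (s.erase a).powerset) fun π _ => mem_powerset.2 (erase_subset_erase a (π.part_subset a))]
  refine sum_congr rfl fun B hB => ?_
  rw [mem_powerset] at hB
  have haB : a ∉ B := fun h => (mem_erase.1 (hB h)).1 rfl
  have hfib : ∀ π : Finpartition s, (π.part a).erase a = B ↔ π.part a = insert a B := fun π => by
    constructor
    · rintro h; rw [← h, insert_erase (π.mem_part_self.2 ha)]
    · rintro h; rw [h, erase_insert haB]
  simp only [hfib]
  exact sum_part_eq_insert v f ha hB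

theorem sup_filter_subset_of_le {π σ : Finpartition s} (h : π ≤ σ) {V : Finset α}
    (hV : V ∈ σ.parts) : (π.parts.filter (· ⊆ V)).sup id = V := by
  refine le_antisymm (Finset.sup_le fun C hC => (mem_filter.1 hC).2) fun x hx => ?_
  obtain ⟨C, hC, hxC⟩ := π.exists_mem (σ.le hV hx)
  obtain ⟨W, hW, hCW⟩ := h hC
  obtain rfl : W = V := σ.eq_of_mem_parts hW hV (hCW hxC) hx
  exact mem_sup.2 ⟨C, mem_filter.2 ⟨hC, hCW⟩, hxC⟩

theorem prod_bind {R : Type*} [CommMonoid R] (σ : Finpartition s)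
    (ρ : ∀ V ∈ σ.parts, Finpartition V) (f : Finset α → R) :
    ∏ C ∈ (σ.bind ρ).parts, f C = ∏ V ∈ σ.parts.attach, ∏ C ∈ (ρ V.1 V.2).parts, f C := by
  rw [bind_parts]
  refine prod_biUnion fun V _ W _ hVW => disjoint_left.2 fun C hCV hCW => ?_
  obtain ⟨x, hx⟩ := (ρ V.1 V.2).nonempty_of_mem_parts hCV
  exact hVW (Subtype.ext (σ.eq_of_mem_parts V.2 W.2 ((ρ V.1 V.2).le hCV hx)
    ((ρ W.1 W.2).le hCW hx)))

open scoped Classical in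
theorem prod_sum_prod_parts_eq_sum_le {R : Type*} [CommSemiring R] (σ : Finpartition s)
    (f : Finset α → R) :
    ∏ V ∈ σ.parts, ∑ ρ : Finpartition V, ∏ C ∈ ρ.parts, f C =
      ∑ π with π ≤ σ, ∏ C ∈ π.parts, f C := by
  rw [prod_sum]
  refine sum_bij' (fun ρ _ => σ.bind fun V hV => ρ V hV)
    (fun π hπ V hV => π.ofSubset (filter_subset (· ⊆ V) π.parts)
      (sup_filter_subset_of_le (mem_filter.1 hπ).2 hV))
    ?_ (fun _ _ => mem_pi.2 fun _ _ => mem_univ _) ?_ ?_ (fun ρ _ => (σ.prod_bind _ f).symm)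
  · refine fun ρ _ => mem_filter.2 ⟨mem_univ _, fun C hC => ?_⟩
    obtain ⟨V, hV, hCV⟩ := mem_bind.1 hC
    exact ⟨V, hV, (ρ V hV).le hCV⟩
  · refine fun ρ _ => funext₂ fun V hV => Finpartition.ext ?_
    ext C
    simp only [ofSubset, mem_filter, mem_bind]
    refine ⟨fun ⟨⟨W, hW, hCW⟩, hCV⟩ => ?_, fun hC => ⟨⟨V, hV, hC⟩, (ρ V hV).le hC⟩⟩
    obtain ⟨x, hx⟩ := (ρ W hW).nonempty_of_mem_parts hCW
    obtain rfl := σ.eq_of_mem_parts hW hV ((ρ W hW).le hCW hx) (hCV hx)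
    exact hCW
  · refine fun π hπ => Finpartition.ext (Finset.ext fun C => ?_)
    simp only [mem_bind, ofSubset, mem_filter]
    refine ⟨fun ⟨_, _, hC, _⟩ => hC, fun hC => ?_⟩
    obtain ⟨V, hV, hCV⟩ := (mem_filter.1 hπ).2 hC
    exact ⟨V, hV, hC, hCV⟩

end Finpartition

section Composition

variable {α : Type*} [DecidableEq α]

theorem PowerSeries.factorial_mul_coeff_subst {R : Type*} [CommRing R] {F : R⟦X⟧}
    (hF : constantCoeff F = 0) (g : R⟦X⟧) (s : Finset α) :
    (#s)! * coeff #s (g.subst F) =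
      ∑ π : Finpartition s, (#π.parts)! * coeff #π.parts g *
        ∏ B ∈ π.parts, (#B)! * coeff #B F := by
  induction hn : #s using Nat.strong_induction_on generalizing s g with
  | _ n ih =>
  rcases n with _ | m
  · obtain rfl := card_eq_zero.1 hn
    have : Unique (Finpartition (∅ : Finset α)) :=
      inferInstanceAs (Unique (Finpartition (⊥ : Finset α)))
    rw [Fintype.sum_unique, Finpartition.parts_eq_empty_iff.2 rfl, coeff_zero_eq_constantCoeff,
      constantCoeff_subst_of_constantCoeff_eq_zero hF]
    simp
  obtain ⟨a, ha⟩ := card_pos.1 (by omega : 0 < #s)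
  have hcard : #(s.erase a) = m := by rw [card_erase_of_mem ha, hn]; rfl
  have hblock : ∀ B ∈ (s.erase a).powerset,
      (↑(#(insert a B))! * coeff #(insert a B) F) *
        ∑ ρ : Finpartition (s.erase a \ B), (↑(#ρ.parts + 1)! * coeff (#ρ.parts + 1) g) *
          ∏ C ∈ ρ.parts, ↑(#C)! * coeff #C F =
      (↑(#B + 1)! * coeff (#B + 1) F) * ((m - #B)! * coeff (m - #B) ((d⁄dX R g).subst F)) := by
    intro B hB
    rw [mem_powerset] at hB
    have haB : a ∉ B := fun h => (mem_erase.1 (hB h)).1 rfl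
    rw [card_insert_of_notMem haB, ← hcard, ← card_sdiff_of_subset hB,
      ih _ (by rw [card_sdiff_of_subset hB]; omega) _ _ rfl]
    congr 1
    refine sum_congr rfl fun ρ _ => ?_
    rw [coeff_derivative, Nat.factorial_succ]
    push_cast
    ring
  rw [factorial_mul_coeff_subst_succ hF, Finpartition.sum_mul_prod_parts_eq_sum_powerset_erase
      (fun k => (k ! : R) * coeff k g) (fun B => (#B)! * coeff #B F) ha, sum_congr rfl hblock,
    sum_powerset_apply_card (fun j => (↑(j + 1)! * coeff (j + 1) F) *
      ((m - j)! * coeff (m - j) ((d⁄dX R g).subst F))), hcard]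

theorem factorial_mul_coeff_exp_subst {A : Type*} [CommRing A] [Algebra ℚ A] {F : A⟦X⟧}
    (hF : constantCoeff F = 0) (s : Finset α) :
    (#s)! * coeff #s ((exp A).subst F) =
      ∑ π : Finpartition s, ∏ B ∈ π.parts, (#B)! * coeff #B F := by
  rw [factorial_mul_coeff_subst hF]
  refine sum_congr rfl fun π _ => ?_
  rw [coeff_exp, ← map_natCast (algebraMap ℚ A), ← map_mul,
    mul_one_div_cancel (Nat.cast_ne_zero.2 (Nat.factorial_ne_zero _)), map_one, one_mul]

variable {K : Type*} [Field K] [CharZero K]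

theorem PowerSeries.log_subst_exp_subst_sub_one {F : K⟦X⟧} (hF : constantCoeff F = 0) :
    (log K).subst ((exp K).subst F - 1) = F := by
  set E : K⟦X⟧ := (exp K).subst F - 1
  have hE : constantCoeff E = 0 := by
    rw [map_sub, constantCoeff_subst_of_constantCoeff_eq_zero hF, constantCoeff_exp, map_one,
      sub_self]
  have hdE : d⁄dX K E = (1 + E) * d⁄dX K F := by
    rw [add_sub_cancel, map_sub, Derivation.map_one_eq_zero, sub_zero,
      derivative_subst (HasSubst.of_constantCoeff_zero' hF), derivative_exp]
  have hgeom : (d⁄dX K (log K)).subst E * (1 + E) = 1 := by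
    have hlog : d⁄dX K (log K) = mk fun n => (-1 : K) ^ n := by rw [deriv_log]; simp
    have := congrArg (substAlgHom (HasSubst.of_constantCoeff_zero' hE))
      (mk_neg_one_pow_mul_one_add_X (R := K))
    rwa [map_mul, map_add, map_one, substAlgHom_X, coe_substAlgHom, ← hlog] at this
  refine derivative.ext ?_ ?_
  · rw [derivative_subst (HasSubst.of_constantCoeff_zero' hE), hdE, ← mul_assoc, hgeom, one_mul]
  · rw [constantCoeff_subst_of_constantCoeff_eq_zero hE, constantCoeff_log, hF]

theorem factorial_mul_coeff_eq_sum_exp_subst {F : K⟦X⟧} (hF : constantCoeff F = 0)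
    {s : Finset α} (hs : s.Nonempty) :
    (#s)! * coeff #s F = ∑ π : Finpartition s, (-1) ^ (#π.parts - 1) * (#π.parts - 1)! *
      ∏ B ∈ π.parts, (#B)! * coeff #B ((exp K).subst F) := by
  have hE : constantCoeff ((exp K).subst F - 1) = 0 := by
    rw [map_sub, constantCoeff_subst_of_constantCoeff_eq_zero hF, constantCoeff_exp, map_one,
      sub_self]
  conv_lhs => rw [← log_subst_exp_subst_sub_one hF]
  rw [factorial_mul_coeff_subst hE]
  refine sum_congr rfl fun π _ => ?_
  obtain ⟨k, hk⟩ : ∃ k, #π.parts = k + 1 :=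
    Nat.exists_eq_add_one.2 (card_pos.2 (π.parts_nonempty hs.ne_empty))
  have hprod : ∀ B ∈ π.parts, coeff #B ((exp K).subst F - 1) = coeff #B ((exp K).subst F) :=
    fun B hB => by
      rw [map_sub, coeff_one, if_neg (card_pos.2 (π.nonempty_of_mem_parts hB)).ne', sub_zero]
  rw [prod_congr rfl fun B hB => by rw [hprod B hB], hk, coeff_log, if_neg k.succ_ne_zero,
    Nat.add_sub_cancel, Nat.factorial_succ]
  push_cast
  field_simp
  ring

open scoped Classical in
theorem factorial_mul_coeff_eq_sum_of_coeff_exp_subst_eq_mul {F G : K⟦X⟧}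
    (hF : constantCoeff F = 0) (hG : constantCoeff G = 0) (c : ℕ → K)
    (hc : ∀ d, coeff d ((exp K).subst F) = c d * coeff d ((exp K).subst G))
    {s : Finset α} (hs : s.Nonempty) :
    (#s)! * coeff #s F = ∑ σ : Finpartition s, (∏ V ∈ σ.parts, (#V)! * coeff #V G) *
      ∑ π with σ ≤ π, (-1) ^ (#π.parts - 1) * (#π.parts - 1)! * ∏ B ∈ π.parts, c #B := by
  have hblocks : ∀ π : Finpartition s, ∏ B ∈ π.parts, (#B)! * coeff #B ((exp K).subst F) =
      (∏ B ∈ π.parts, c #B) * ∑ σ with σ ≤ π, ∏ V ∈ σ.parts, (#V)! * coeff #V G := fun π => by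
    rw [← π.prod_sum_prod_parts_eq_sum_le, ← prod_mul_distrib]
    refine prod_congr rfl fun B _ => ?_
    rw [← factorial_mul_coeff_exp_subst hG, hc]
    ring
  simp_rw [factorial_mul_coeff_eq_sum_exp_subst hF hs, hblocks, mul_sum]
  rw [sum_comm' (s' := fun σ => {π | σ ≤ π}) (t' := univ) fun π σ => by simp]
  exact sum_congr rfl fun σ _ => sum_congr rfl fun π _ => by ring

end Composition

theorem fexp_eq_exp_subst {F : ℝ⟦X⟧} (hF : constantCoeff F = 0) : fexp F = (exp ℝ).subst F := by
  ext n
  rw [fexp, coeff_mk, coeff_subst_eq_sum_range hF]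
  refine sum_congr rfl fun k _ => ?_
  rw [coeff_exp, map_div₀, map_one, map_natCast, div_eq_inv_mul, one_div]

theorem constantCoeff_evenSeries (x : ℕ → ℝ) : constantCoeff (evenSeries x) = 0 := by
  simp [← coeff_zero_eq_constantCoeff_apply, evenSeries]

theorem coeff_evenSeries_two_mul {x : ℕ → ℝ} {n : ℕ} (hn : n ≠ 0) :
    coeff (2 * n) (evenSeries x) = x n / n := by
  rw [evenSeries, coeff_mk, if_pos ⟨by omega, by omega⟩, Nat.mul_div_cancel_left n two_pos]

theorem factorial_mul_coeff_C_mul_evenSeries_of_even (t : ℝ) (x : ℕ → ℝ) {d : ℕ} (hd : d ≠ 0)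
    (he : Even d) : d ! * coeff d (C t * evenSeries x) = 2 * t * (d - 1)! * x (d / 2) := by
  obtain ⟨k, rfl⟩ := he
  rw [← two_mul] at hd ⊢
  rw [coeff_C_mul, evenSeries, coeff_mk, if_pos ⟨hd, by omega⟩,
    Nat.mul_div_cancel_left k two_pos, ← Nat.mul_factorial_pred hd]
  have hk : (k : ℝ) ≠ 0 := by exact_mod_cast (by omega : k ≠ 0)
  push_cast [Nat.one_le_iff_ne_zero.2 hd]
  field_simp

theorem coeff_C_mul_evenSeries_of_not_even (t : ℝ) (x : ℕ → ℝ) {d : ℕ} (he : ¬Even d) :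
    coeff d (C t * evenSeries x) = 0 := by
  rw [coeff_C_mul, evenSeries, coeff_mk, if_neg fun h => he (Nat.even_iff.2 h.2), mul_zero]

/-- Zero in odd degrees, where both series vanish, so that partitions with an odd block drop out. -/
noncomputable def pochWeight (t u : ℝ) (d : ℕ) : ℝ :=
  if Even d then (pochEval t (d / 2) * pochEval u (d / 2))⁻¹ else 0

theorem pochWeight_of_even (t u : ℝ) {d : ℕ} (hd : Even d) :
    pochWeight t u d = (pochEval t (d / 2) * pochEval u (d / 2))⁻¹ := if_pos hd

theorem pochWeight_of_not_even (t u : ℝ) {d : ℕ} (hd : ¬Even d) : pochWeight t u d = 0 :=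
  if_neg hd

theorem coeff_coeffSeriesTU (t u : ℝ) (a : ℕ → ℝ) (d : ℕ) :
    coeff d (coeffSeriesTU t u a) = pochWeight t u d * coeff d (coeffSeries a) := by
  rw [coeffSeriesTU, coeffSeries, pochWeight, coeff_mk, coeff_mk]
  by_cases hd : d = 0
  · simp [hd, pochEval]
  rw [if_neg hd, if_neg hd]
  by_cases he : d % 2 = 0
  · rw [if_pos (Nat.even_iff.2 he), if_pos he, if_pos he, div_eq_inv_mul]
  · rw [if_neg (mt Nat.even_iff.1 he), if_neg he, if_neg he, zero_mul]

theorem isEvenPartition_of_prod_ne_zero {M : Type*} [CommMonoidWithZero M] {n : ℕ} {g : ℕ → M}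
    (hg : ∀ d, ¬Even d → g d = 0) {π : Finpartition (univ : Finset (Fin n))}
    (h : ∏ B ∈ π.parts, g #B ≠ 0) : IsEvenPartition π :=
  fun _ hB => by_contra fun hodd => h (prod_eq_zero hB (hg _ hodd))

theorem prod_factorial_mul_coeff_C_mul_evenSeries (t : ℝ) (x : ℕ → ℝ) {N : ℕ}
    {σ : Finpartition (univ : Finset (Fin N))} (hσ : IsEvenPartition σ) :
    ∏ V ∈ σ.parts, (#V)! * coeff #V (C t * evenSeries x) =
      (2 * t) ^ #σ.parts * (∏ V ∈ σ.parts, ((#V - 1)! : ℝ)) * ∏ V ∈ σ.parts, x (#V / 2) := by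
  rw [prod_congr rfl fun V hV => by
      rw [factorial_mul_coeff_C_mul_evenSeries_of_even t x
        (σ.nonempty_of_mem_parts hV).card_pos.ne' (hσ V hV)],
    prod_mul_distrib, prod_mul_distrib, prod_mul_distrib, prod_const, prod_const, mul_pow]

open scoped Classical in
theorem sum_le_eq_sum_evenPartitions_isRefinement (t u : ℝ) (w : ℕ → ℝ) {N : ℕ}
    (σ : Finpartition (univ : Finset (Fin N))) :
    ∑ π with σ ≤ π, w #π.parts * ∏ B ∈ π.parts, pochWeight t u #B =
      ∑ π ∈ (evenPartitions N).filter (fun π => IsRefinement π σ),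
        w #π.parts / ∏ B ∈ π.parts, pochEval t (#B / 2) * pochEval u (#B / 2) := by
  rw [← sum_filter_of_ne (p := IsEvenPartition) ?_,
    evenPartitions, filter_filter, filter_filter]
  · refine sum_congr (filter_congr fun π _ => and_comm) fun π hπ => ?_
    have hπ : IsEvenPartition π := (mem_filter.1 hπ).2.1
    rw [prod_congr rfl fun B hB => pochWeight_of_even t u (hπ B hB), prod_inv_distrib,
      div_eq_mul_inv]
  · exact fun π _ hπ =>
      isEvenPartition_of_prod_ne_zero (fun _ => pochWeight_of_not_even t u)
        (right_ne_zero_of_mul hπ)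

open Classical in
theorem cumulant_in_terms_of_moments_general (t u : ℝ)
    (a κ m : ℕ → ℝ)
    (h1 : fexp (evenSeries κ) = coeffSeriesTU t u a)
    (h2 : fexp (PowerSeries.C t * evenSeries m) = coeffSeries a) :
    ∀ n : ℕ, 1 ≤ n →
      κ n = 1 / (2 * ((2 * n - 1).factorial : ℝ)) *
        ∑ σ ∈ evenPartitions (2 * n),
          ((2 * t) ^ σ.parts.card * (∏ V ∈ σ.parts, ((V.card - 1).factorial : ℝ)) *
            ∑ π ∈ (evenPartitions (2 * n)).filter (fun π => IsRefinement π σ),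
              ((-1 : ℝ) ^ (π.parts.card - 1) * ((π.parts.card - 1).factorial : ℝ)) /
                ∏ B ∈ π.parts, pochEval t (B.card / 2) * pochEval u (B.card / 2)) *
            ∏ V ∈ σ.parts, m (V.card / 2) := by
  intro n hn
  have hG : constantCoeff (C t * evenSeries m) = 0 := by
    rw [map_mul, constantCoeff_evenSeries, mul_zero]
  have hexp : ∀ d, coeff d ((exp ℝ).subst (evenSeries κ)) =
      pochWeight t u d * coeff d ((exp ℝ).subst (C t * evenSeries m)) := fun d => by
    rw [← fexp_eq_exp_subst (constantCoeff_evenSeries κ), ← fexp_eq_exp_subst hG, h1, h2,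
      coeff_coeffSeriesTU]
  have key := factorial_mul_coeff_eq_sum_of_coeff_exp_subst_eq_mul
    (constantCoeff_evenSeries κ) hG _ hexp (s := (univ : Finset (Fin (2 * n))))
    ⟨⟨0, by omega⟩, mem_univ _⟩
  rw [Finset.card_fin, coeff_evenSeries_two_mul (by omega),
    ← sum_filter_of_ne (p := IsEvenPartition) ?_] at key
  · calc κ n = 1 / (2 * (2 * n - 1)!) * ((2 * n)! * (κ n / n)) := by
          rw [← Nat.mul_factorial_pred (by omega : 2 * n ≠ 0)]
          push_cast
          field_simp
      _ = _ := by
          rw [key]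
          congr 1
          refine sum_congr rfl fun σ hσ => ?_
          rw [prod_factorial_mul_coeff_C_mul_evenSeries t m (mem_filter.1 hσ).2,
            sum_le_eq_sum_evenPartitions_isRefinement t u fun k => (-1 : ℝ) ^ (k - 1) * (k - 1)!]
          ring
  · exact fun σ _ hσ => isEvenPartition_of_prod_ne_zero
      (g := fun d => (d ! : ℝ) * coeff d (C t * evenSeries m))
      (fun _ hd => by rw [coeff_C_mul_evenSeries_of_not_even t m hd, mul_zero])
      (left_ne_zero_of_mul hσ)

open Classical in
/-- Theorem 3.4 (second formula): cumulants in terms of moments. -/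
theorem cumulant_in_terms_of_moments (t u : ℝ)
    (ht : ∀ i : ℕ, t + i ≠ 0) (hu : ∀ i : ℕ, u + i ≠ 0)
    (a κ m : ℕ → ℝ)
    (h1 : fexp (evenSeries κ) = coeffSeriesTU t u a)
    (h2 : fexp (PowerSeries.C t * evenSeries m) = coeffSeries a) :
    ∀ n : ℕ, 1 ≤ n →
      κ n = 1 / (2 * ((2 * n - 1).factorial : ℝ)) *
        ∑ σ ∈ evenPartitions (2 * n),
          ((2 * t) ^ σ.parts.card * (∏ V ∈ σ.parts, ((V.card - 1).factorial : ℝ)) *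
            ∑ π ∈ (evenPartitions (2 * n)).filter (fun π => IsRefinement π σ),
              ((-1 : ℝ) ^ (π.parts.card - 1) * ((π.parts.card - 1).factorial : ℝ)) /
                ∏ B ∈ π.parts, pochEval t (B.card / 2) * pochEval u (B.card / 2)) *
            ∏ V ∈ σ.parts, m (V.card / 2) :=
  cumulant_in_terms_of_moments_general t u a κ m h1 h2
end

section
/- Let d ≥ 1 and let p(x) = x^d + Σ_{i=1}^d (−1)^i a_i x^{d−i} and r(x) = x^d + Σ_{i=1}^d (−1)^i b_i x^{d−i} be monic real polynomials of degree d. Then the finite free cumulants of their symmetric additive convolution satisfy K_ℓ[p ⊞_d r] = K_ℓ[p] + K_ℓ[r] for all ℓ = 1, …, d. -/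
open Finset

/-- Formal logarithm of a power series with constant term 1. -/
noncomputable def flog (F : PowerSeries ℝ) : PowerSeries ℝ :=
  PowerSeries.mk fun n =>
    ∑ k ∈ Finset.range n, (-1 : ℝ) ^ k * (PowerSeries.coeff (R := ℝ) n ((F - 1) ^ (k + 1))) / (k + 1)

/-- The finite free cumulants `K_ℓ[p]` of a monic polynomial
`p(x) = x^d + Σ_{i=1}^d (-1)^i a_i x^{d-i}` of degree `d`, given in terms of its
coefficient sequence `a`:  `K_ℓ[p] = ℓ·[z^ℓ] log(1 + Σ_{i=1}^d (a_i/(-d)_i) z^i)`. -/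
noncomputable def ffCumulant (d : ℕ) (a : ℕ → ℝ) (ℓ : ℕ) : ℝ :=
  (ℓ : ℝ) * PowerSeries.coeff (R := ℝ) ℓ (flog (PowerSeries.mk fun j =>
    if j = 0 then 1
    else if j ≤ d then a j / pochEval (-(d : ℝ)) j else 0))

/-- The coefficient sequence of the symmetric additive convolution `p ⊞_d r`:
`(p ⊞_d r)(x) = x^d + Σ_{k=1}^d (-1)^k c_k x^{d-k}` with
`c_k = Σ_{i+j=k} ((d-i)!(d-j)!/(d!(d-k)!)) a_i b_j` (with `a_0 = b_0 = 1`). -/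
noncomputable def symConvCoeff (d : ℕ) (a b : ℕ → ℝ) (k : ℕ) : ℝ :=
  ∑ i ∈ Finset.range (k + 1),
    (((d - i).factorial : ℝ) * ((d - (k - i)).factorial : ℝ) /
        ((d.factorial : ℝ) * ((d - k).factorial : ℝ))) *
      ((if i = 0 then 1 else a i) * (if k - i = 0 then 1 else b (k - i)))

/-!
With `A(z) = 1 + Σ_{i ≤ d} a_i z^i / (-d)_i`, the weights of `⊞_d` are exactly what makes
`(-d)_k = (-1)^k d!/(d-k)!` factor as `(-d)_i (-d)_{k-i}` times the weight, so the series of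
`p ⊞_d r` agrees with `A(z) B(z)` up to degree `d`. The formal logarithm turns this product
into a sum, and its coefficient of `z^ℓ` only sees coefficients of degree `≤ ℓ ≤ d`.
Additivity of `flog` is checked on derivatives: `F · (flog F)' = F'`, because `F` times the
derivative of a partial sum of the log series is `(1 - (1 - F)^N) F'`.
-/

open PowerSeries

lemma coeff_flog_eq_coeff_trunc {F G : ℝ⟦X⟧} {n N : ℕ} (hn : n < N)
    (h : trunc N F = trunc N G) : coeff n (flog F) = coeff n (flog G) := by
  have hpow (H : ℝ⟦X⟧) (k : ℕ) :
      coeff n ((H - 1) ^ k) = coeff n ((trunc N (H - 1) : ℝ⟦X⟧) ^ k) := by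
    rw [← coeff_coe_trunc_of_lt hn, ← trunc_trunc_pow, coeff_coe_trunc_of_lt hn]
  simp only [flog, coeff_mk, hpow F, hpow G, map_sub, h]

noncomputable def flogPartial (F : ℝ⟦X⟧) (N : ℕ) : ℝ⟦X⟧ :=
  ∑ k ∈ range N, C ((-1) ^ k / (k + 1 : ℝ)) * (F - 1) ^ (k + 1)

lemma trunc_flog {F : ℝ⟦X⟧} (hF : constantCoeff F = 1) (N : ℕ) :
    trunc N (flog F) = trunc N (flogPartial F N) := by
  ext n
  rw [coeff_trunc, coeff_trunc]
  split_ifs with hn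
  · have hX : X ∣ F - 1 := X_dvd_iff.mpr (by simp [hF])
    rw [flogPartial, flog, coeff_mk, map_sum]
    refine Finset.sum_subset (range_subset_range.mpr hn.le) (fun k _ hk => ?_) |>.trans ?_
    · rw [X_pow_dvd_iff.mp (pow_dvd_pow_of_dvd hX _) n (by simp at hk; omega), mul_zero,
        zero_div]
    · exact Finset.sum_congr rfl fun k _ => by rw [coeff_C_mul]; ring
  · rfl

lemma derivative_flogPartial (F : ℝ⟦X⟧) (N : ℕ) :
    d⁄dX ℝ (flogPartial F N) = (∑ k ∈ range N, (1 - F) ^ k) * d⁄dX ℝ F := by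
  rw [flogPartial, map_sum, Finset.sum_mul]
  refine Finset.sum_congr rfl fun k _ => ?_
  have hk : (k + 1 : ℝ) ≠ 0 := by positivity
  rw [Derivation.leibniz, derivative_C, smul_zero, add_zero, derivative_pow, map_sub,
    derivative_one, sub_zero, smul_eq_mul, Nat.add_sub_cancel,
    show (1 - F) ^ k = C ((-1) ^ k) * (F - 1) ^ k by rw [map_pow, map_neg, map_one, ← neg_pow,
      neg_sub],
    show ((k + 1 : ℕ) : ℝ⟦X⟧) = C (k + 1 : ℝ) by simp]
  calc C ((-1) ^ k / (k + 1 : ℝ)) * (C (k + 1 : ℝ) * (F - 1) ^ k * d⁄dX ℝ F)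
      = C ((-1) ^ k / (k + 1 : ℝ) * (k + 1)) * (F - 1) ^ k * d⁄dX ℝ F := by rw [map_mul]; ring
    _ = C ((-1) ^ k) * (F - 1) ^ k * d⁄dX ℝ F := by rw [div_mul_cancel₀ _ hk]

lemma mul_derivative_flog {F : ℝ⟦X⟧} (hF : constantCoeff F = 1) :
    F * d⁄dX ℝ (flog F) = d⁄dX ℝ F := by
  ext n
  have hX : X ∣ 1 - F := X_dvd_iff.mpr (by simp [hF])
  have htrunc :
      trunc (n + 1) (d⁄dX ℝ (flog F)) = trunc (n + 1) (d⁄dX ℝ (flogPartial F (n + 2))) := by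
    rw [trunc_derivative, trunc_derivative, trunc_flog hF]
  have hgeom : F * ∑ k ∈ range (n + 2), (1 - F) ^ k = 1 - (1 - F) ^ (n + 2) := by
    simpa using mul_neg_geom_sum (1 - F) (n + 2)
  rw [coeff_mul_eq_coeff_trunc_mul_trunc _ _ n.lt_succ_self, htrunc,
    ← coeff_mul_eq_coeff_trunc_mul_trunc _ _ n.lt_succ_self, derivative_flogPartial, ← mul_assoc,
    hgeom, sub_mul, one_mul, map_sub,
    X_pow_dvd_iff.mp ((pow_dvd_pow_of_dvd hX _).mul_right _) n (by omega), sub_zero]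

lemma flog_mul {F G : ℝ⟦X⟧} (hF : constantCoeff F = 1) (hG : constantCoeff G = 1) :
    flog (F * G) = flog F + flog G := by
  have hFG : constantCoeff (F * G) = 1 := by rw [map_mul, hF, hG, mul_one]
  have hne : F * G ≠ 0 := fun h => by simp [h] at hFG
  refine derivative.ext (mul_left_cancel₀ hne ?_) (by simp [flog])
  calc F * G * d⁄dX ℝ (flog (F * G)) = d⁄dX ℝ (F * G) := mul_derivative_flog hFG
    _ = F * (G * d⁄dX ℝ (flog G)) + G * (F * d⁄dX ℝ (flog F)) := by
        rw [Derivation.leibniz, smul_eq_mul, smul_eq_mul, mul_derivative_flog hF,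
          mul_derivative_flog hG]
    _ = F * G * d⁄dX ℝ (flog F + flog G) := by rw [map_add]; ring

lemma pochEval_neg_natCast_of_le {d n : ℕ} (h : n ≤ d) :
    pochEval (-(d : ℝ)) n = (-1) ^ n * d.factorial / (d - n).factorial := by
  rw [pochEval, ascPochhammer_eval_neg_eq_descPochhammer, descPochhammer_eval_eq_descFactorial,
    ← Nat.factorial_mul_descFactorial h, Nat.cast_mul]
  field_simp

lemma symConv_weight_div_pochEval {d i k : ℕ} (hik : i ≤ k) (hk : k ≤ d) (A B : ℝ) :
    (d - i).factorial * (d - (k - i)).factorial / (d.factorial * (d - k).factorial) * (A * B) /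
        pochEval (-(d : ℝ)) k =
      A / pochEval (-(d : ℝ)) i * (B / pochEval (-(d : ℝ)) (k - i)) := by
  obtain ⟨j, rfl⟩ := Nat.exists_eq_add_of_le hik
  rw [Nat.add_sub_cancel_left, pochEval_neg_natCast_of_le hk,
    pochEval_neg_natCast_of_le (by omega), pochEval_neg_natCast_of_le (by omega), pow_add]
  field_simp

noncomputable def ffSeries (d : ℕ) (a : ℕ → ℝ) : ℝ⟦X⟧ :=
  mk fun j => if j = 0 then 1 else if j ≤ d then a j / pochEval (-(d : ℝ)) j else 0

lemma ffCumulant_eq_coeff_flog (d : ℕ) (a : ℕ → ℝ) (ℓ : ℕ) :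
    ffCumulant d a ℓ = ℓ * coeff ℓ (flog (ffSeries d a)) := rfl

lemma constantCoeff_ffSeries (d : ℕ) (a : ℕ → ℝ) : constantCoeff (ffSeries d a) = 1 := by
  simp [ffSeries, ← coeff_zero_eq_constantCoeff_apply]

lemma coeff_ffSeries_of_le {d i : ℕ} (a : ℕ → ℝ) (h : i ≤ d) :
    coeff i (ffSeries d a) = (if i = 0 then 1 else a i) / pochEval (-(d : ℝ)) i := by
  rw [ffSeries, coeff_mk]
  split_ifs <;> simp_all [pochEval]

lemma symConvCoeff_zero (d : ℕ) (a b : ℕ → ℝ) : symConvCoeff d a b 0 = 1 := by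
  simp [symConvCoeff, Nat.factorial_ne_zero]

lemma trunc_ffSeries_symConvCoeff (d : ℕ) (a b : ℕ → ℝ) :
    trunc (d + 1) (ffSeries d (symConvCoeff d a b)) =
      trunc (d + 1) (ffSeries d a * ffSeries d b) := by
  ext k
  rw [coeff_trunc, coeff_trunc]
  split_ifs with hk
  · have hkd : k ≤ d := Nat.lt_succ_iff.mp hk
    have hk0 : (if k = 0 then 1 else symConvCoeff d a b k) = symConvCoeff d a b k := by
      split_ifs with h <;> simp [h, symConvCoeff_zero]
    rw [coeff_ffSeries_of_le _ hkd, hk0, coeff_mul,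
      Nat.sum_antidiagonal_eq_sum_range_succ_mk, symConvCoeff, Finset.sum_div]
    refine Finset.sum_congr rfl fun i hi => ?_
    have hik : i ≤ k := Nat.lt_succ_iff.mp (mem_range.mp hi)
    rw [coeff_ffSeries_of_le _ (hik.trans hkd), coeff_ffSeries_of_le _ (by omega),
      symConv_weight_div_pochEval hik hkd]
  · rfl

theorem finite_free_cumulants_linearize_general (d : ℕ) (a b : ℕ → ℝ) :
    ∀ ℓ : ℕ, 1 ≤ ℓ → ℓ ≤ d →
      ffCumulant d (symConvCoeff d a b) ℓ = ffCumulant d a ℓ + ffCumulant d b ℓ := by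
  intro ℓ _ hℓ
  rw [ffCumulant_eq_coeff_flog, ffCumulant_eq_coeff_flog, ffCumulant_eq_coeff_flog,
    coeff_flog_eq_coeff_trunc (Nat.lt_succ_of_le hℓ) (trunc_ffSeries_symConvCoeff d a b),
    flog_mul (constantCoeff_ffSeries d a) (constantCoeff_ffSeries d b), map_add, mul_add]

/-- Corollary 4.3 (Arizmendi–Perales): finite free cumulants linearize the symmetric
additive convolution:  `K_ℓ[p ⊞_d r] = K_ℓ[p] + K_ℓ[r]` for all `ℓ = 1, …, d`. -/
theorem finite_free_cumulants_linearize (d : ℕ) (hd : 1 ≤ d) (a b : ℕ → ℝ) :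
    ∀ ℓ : ℕ, 1 ≤ ℓ → ℓ ≤ d →
      ffCumulant d (symConvCoeff d a b) ℓ = ffCumulant d a ℓ + ffCumulant d b ℓ :=
  finite_free_cumulants_linearize_general d a b
end
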